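/- Let G = (V, E) be a finite simple graph with m edges, let i ≥ 1, let α ≥ i + 1, and let w_i, w_{i+1} ≥ 0 (and arbitrary nonnegative w_j for other indices j ≥ 2, with w_0 = 0, w_1 = 1). Construct the hypergraph H whose vertex set is V together with new vertices s_1, …, s_α and t_1, …, t_α, and whose hyperedges are: all 2-element subsets of {s_1, …, s_α}, all 2-element subsets of {t_1, …, t_α}, and for each edge {x, y} ∈ E the hyperedge {s_1, …, s_i, x, y, t_1, …, t_i}. Then for every cut S* with {s_1, …, s_α} ⊆ S* and {t_1, …, t_α} disjoint from S*, the cardinality-based cost of S* equals w_i·(m − c) + w_{i+1}·c, where c is the number of edges of G with exactly one endpoint in S*. -/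

import Mathlib

/-- The split value of a hyperedge `e` with respect to a cut `S`:
`min (|e ∩ S|, |e \ S|)`. -/
def splitVal {W : Type*} [DecidableEq W] (S e : Finset W) : ℕ :=
  min (e ∩ S).card (e \ S).card

/-- The vertex set of the constructed hypergraph: the original vertices `V`
together with `s`-vertices and `t`-vertices (indexed by naturals). -/
abbrev Vtx (V : Type*) := V ⊕ ℕ ⊕ ℕ

/-- The vertex `s_i`. -/
def sV {V : Type*} (i : ℕ) : Vtx V := Sum.inr (Sum.inl i)

/-- The vertex `t_i`. -/
def tV {V : Type*} (i : ℕ) : Vtx V := Sum.inr (Sum.inr i)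

/-- The set `{s_1, …, s_j}`. -/
def sSet (V : Type*) [DecidableEq V] (j : ℕ) : Finset (Vtx V) := (Finset.Icc 1 j).image sV

/-- The set `{t_1, …, t_j}`. -/
def tSet (V : Type*) [DecidableEq V] (j : ℕ) : Finset (Vtx V) := (Finset.Icc 1 j).image tV

/-- The two endpoints of a graph edge, as a `Finset`. -/
def pairFinset {V : Type*} [DecidableEq V] (e : Sym2 V) : Finset V :=
  Sym2.lift ⟨fun x y => ({x, y} : Finset V), fun _ _ => Finset.pair_comm _ _⟩ e

/-- The image `{x, y}` (inside `Vtx V`) of a graph edge `{x, y}`. -/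
def edgeImg {V : Type*} [DecidableEq V] (e : Sym2 V) : Finset (Vtx V) :=
  (pairFinset e).image Sum.inl

/-- The maximum cut value of `G`: the maximum over subsets `U` of the vertex set
of the number of edges with exactly one endpoint in `U`. -/
def maxCut {V : Type*} [Fintype V] [DecidableEq V] (G : SimpleGraph V)
    [DecidableRel G.Adj] : ℕ :=
  Finset.univ.sup fun U : Finset V =>
    (G.edgeFinset.filter (fun e => (pairFinset e ∩ U).card = 1)).card

/-- The hyperedge family built from `G`: the 2-element subsets of the two cliques,
and for each edge `{x,y}` of `G` the hyperedge `{s_1,…,s_i,x,y,t_1,…,t_i}`. -/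
def H2 {V : Type*} [Fintype V] [DecidableEq V] (G : SimpleGraph V) [DecidableRel G.Adj]
    (α i : ℕ) : Finset (Finset (Vtx V)) :=
  (sSet V α).powersetCard 2 ∪ (tSet V α).powersetCard 2 ∪
    G.edgeFinset.image (fun e => sSet V i ∪ edgeImg e ∪ tSet V i)

/-!
Every clique hyperedge lies on one side of the cut and costs `w 0 = 0`. The hyperedge of a
graph edge `xy` has `s_1, …, s_i` inside and `t_1, …, t_i` outside the cut, so its split value
is `i + 1` if exactly one of `x, y` lies in the cut and `i` otherwise; summing over the edges
gives `w i` for each of the `m - c` uncut edges and `w (i + 1)` for each of the `c` cut ones.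
-/

open Finset

lemma splitVal_eq_zero_of_subset {W : Type*} [DecidableEq W] {S e : Finset W} (h : e ⊆ S) :
    splitVal S e = 0 := by
  simp [splitVal, sdiff_eq_empty_iff_subset.mpr h]

lemma splitVal_eq_zero_of_disjoint {W : Type*} [DecidableEq W] {S e : Finset W}
    (h : Disjoint e S) : splitVal S e = 0 := by
  simp [splitVal, disjoint_iff_inter_eq_empty.mp h]

lemma splitVal_union_union {W : Type*} [DecidableEq W] {S A B C : Finset W}
    (hA : A ⊆ S) (hC : Disjoint C S) (hAB : Disjoint A B) (hBC : Disjoint B C) :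
    splitVal S (A ∪ B ∪ C) = min (#A + #(B ∩ S)) (#(B \ S) + #C) := by
  have hInter : (A ∪ B ∪ C) ∩ S = A ∪ B ∩ S := by
    rw [union_inter_distrib_right, union_inter_distrib_right, inter_eq_left.mpr hA,
      disjoint_iff_inter_eq_empty.mp hC, union_empty]
  have hDiff : (A ∪ B ∪ C) \ S = B \ S ∪ C := by
    rw [union_sdiff_distrib, union_sdiff_distrib, sdiff_eq_empty_iff_subset.mpr hA,
      empty_union, sdiff_eq_self_of_disjoint hC]
  rw [splitVal, hInter, hDiff, card_union_of_disjoint (hAB.mono_right inter_subset_left),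
    card_union_of_disjoint (hBC.mono_left sdiff_subset)]

lemma sV_injective {V : Type*} : Function.Injective (sV (V := V)) :=
  Sum.inr_injective.comp Sum.inl_injective

lemma tV_injective {V : Type*} : Function.Injective (tV (V := V)) :=
  Sum.inr_injective.comp Sum.inr_injective

section
variable {V : Type*} [DecidableEq V]

lemma sSet_card (j : ℕ) : #(sSet V j) = j := by
  rw [sSet, card_image_of_injective _ sV_injective, Nat.card_Icc, Nat.add_sub_cancel]

lemma tSet_card (j : ℕ) : #(tSet V j) = j := by
  rw [tSet, card_image_of_injective _ tV_injective, Nat.card_Icc, Nat.add_sub_cancel]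

lemma sSet_subset_sSet {j k : ℕ} (h : j ≤ k) : sSet V j ⊆ sSet V k :=
  image_subset_image (Icc_subset_Icc_right h)

lemma tSet_subset_tSet {j k : ℕ} (h : j ≤ k) : tSet V j ⊆ tSet V k :=
  image_subset_image (Icc_subset_Icc_right h)

lemma disjoint_sSet_tSet (j k : ℕ) : Disjoint (sSet V j) (tSet V k) := by
  simp [disjoint_left, sSet, tSet, sV, tV]

lemma disjoint_sSet_edgeImg (j : ℕ) (e : Sym2 V) : Disjoint (sSet V j) (edgeImg e) := by
  simp [disjoint_left, sSet, edgeImg, sV]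

lemma disjoint_edgeImg_tSet (e : Sym2 V) (j : ℕ) : Disjoint (edgeImg e) (tSet V j) := by
  simp [disjoint_left, tSet, edgeImg, tV]

lemma pairFinset_eq_toFinset (e : Sym2 V) : pairFinset e = e.toFinset := by
  induction e using Sym2.inductionOn with
  | hf x y => exact Sym2.toFinset_mk_eq.symm

lemma edgeImg_card {e : Sym2 V} (he : ¬ e.IsDiag) : #(edgeImg e) = 2 := by
  rw [edgeImg, card_image_of_injective _ Sum.inl_injective, pairFinset_eq_toFinset,
    Sym2.card_toFinset_of_not_isDiag e he]

def edgeHyperedge (i : ℕ) (e : Sym2 V) : Finset (Vtx V) := sSet V i ∪ edgeImg e ∪ tSet V i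

lemma inl_mem_edgeHyperedge {i : ℕ} {e : Sym2 V} {x : V} :
    Sum.inl x ∈ edgeHyperedge i e ↔ x ∈ e := by
  simp [edgeHyperedge, sSet, tSet, sV, tV, edgeImg, pairFinset_eq_toFinset]

lemma edgeHyperedge_injective (i : ℕ) : Function.Injective (edgeHyperedge (V := V) i) :=
  fun e f h => Sym2.ext fun x => by rw [← inl_mem_edgeHyperedge, h, inl_mem_edgeHyperedge]

lemma inl_notMem_sSet (j : ℕ) (x : V) : Sum.inl x ∉ sSet V j := by
  simp [sSet, sV]

lemma inl_notMem_tSet (j : ℕ) (x : V) : Sum.inl x ∉ tSet V j := by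
  simp [tSet, tV]

lemma edgeHyperedge_not_subset {T : Finset (Vtx V)} (hT : ∀ x, Sum.inl x ∉ T) (i : ℕ)
    (e : Sym2 V) : ¬ edgeHyperedge i e ⊆ T := fun h =>
  hT _ (h (inl_mem_edgeHyperedge.mpr (Sym2.out_fst_mem e)))

lemma splitVal_edgeHyperedge {S : Finset (Vtx V)} {i : ℕ} {e : Sym2 V} (hS : sSet V i ⊆ S)
    (hT : Disjoint (tSet V i) S) (he : ¬ e.IsDiag) :
    splitVal S (edgeHyperedge i e) = if #(edgeImg e ∩ S) = 1 then i + 1 else i := by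
  rw [edgeHyperedge, splitVal_union_union hS hT (disjoint_sSet_edgeImg i e)
    (disjoint_edgeImg_tSet e i), sSet_card, tSet_card]
  have hsplit := card_sdiff_add_card_inter (edgeImg e) S
  rw [edgeImg_card he] at hsplit
  split_ifs <;> omega

lemma sum_H2_eq_sum_edgeFinset [Fintype V] (G : SimpleGraph V) [DecidableRel G.Adj]
    {M : Type*} [AddCommMonoid M] {w : ℕ → M} (hw0 : w 0 = 0) {α i : ℕ} {S : Finset (Vtx V)}
    (hS : sSet V α ⊆ S) (hT : Disjoint (tSet V α) S) :
    ∑ h ∈ H2 G α i, w (splitVal S h) = ∑ e ∈ G.edgeFinset, w (splitVal S (edgeHyperedge i e)) := by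
  have hst : Disjoint ((sSet V α).powersetCard 2) ((tSet V α).powersetCard 2) := by
    refine disjoint_left.mpr fun h hs ht => ?_
    rw [mem_powersetCard] at hs ht
    obtain ⟨v, hv⟩ := card_pos.mp (hs.2 ▸ two_pos)
    exact disjoint_left.mp (disjoint_sSet_tSet α α) (hs.1 hv) (ht.1 hv)
  have hedge : Disjoint ((sSet V α).powersetCard 2 ∪ (tSet V α).powersetCard 2)
      (G.edgeFinset.image (edgeHyperedge i)) := by
    refine disjoint_right.mpr fun h hh hclique => ?_
    obtain ⟨e, -, rfl⟩ := mem_image.mp hh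
    rcases mem_union.mp hclique with hs | ht
    · exact edgeHyperedge_not_subset (inl_notMem_sSet α) i e (mem_powersetCard.mp hs).1
    · exact edgeHyperedge_not_subset (inl_notMem_tSet α) i e (mem_powersetCard.mp ht).1
  have hzero_s : ∀ h ∈ (sSet V α).powersetCard 2, w (splitVal S h) = 0 := fun h hh => by
    rw [splitVal_eq_zero_of_subset ((mem_powersetCard.mp hh).1.trans hS), hw0]
  have hzero_t : ∀ h ∈ (tSet V α).powersetCard 2, w (splitVal S h) = 0 := fun h hh => by
    rw [splitVal_eq_zero_of_disjoint (hT.mono_left (mem_powersetCard.mp hh).1), hw0]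
  have hH2 : H2 G α i = (sSet V α).powersetCard 2 ∪ (tSet V α).powersetCard 2 ∪
      G.edgeFinset.image (edgeHyperedge i) := rfl
  rw [hH2, sum_union hedge, sum_union hst, sum_eq_zero hzero_s, sum_eq_zero hzero_t,
    sum_image fun e _ f _ h => edgeHyperedge_injective i h, zero_add, zero_add]

end

lemma sum_apply_ite_eq {ι R : Type*} [CommRing R] (s : Finset ι) (p : ι → Prop) [DecidablePred p]
    (f : ℕ → R) (a b : ℕ) :
    ∑ x ∈ s, f (if p x then a else b) = f b * (#s - #(s.filter p) : R) + f a * #(s.filter p) := by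
  simp_rw [apply_ite f]
  rw [sum_ite, sum_const, sum_const, nsmul_eq_mul', nsmul_eq_mul',
    ← card_filter_add_card_filter_not (s := s) p]
  push_cast
  ring

theorem stmt2_general {V : Type*} [Fintype V] [DecidableEq V]
    (G : SimpleGraph V) [DecidableRel G.Adj]
    (m : ℕ) (hm : m = G.edgeFinset.card)
    (i : ℕ) (α : ℕ) (hα : i + 1 ≤ α)
    (w : ℕ → ℝ) (hw0 : w 0 = 0)
    (S : Finset (Vtx V))
    (hS : sSet V α ⊆ S) (hT : ∀ v ∈ tSet V α, v ∉ S)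
    (c : ℕ)
    (hc : c = (G.edgeFinset.filter
      (fun e => ((edgeImg e).filter (· ∈ S)).card = 1)).card) :
    ∑ e ∈ H2 G α i, w (splitVal S e) = w i * ((m : ℝ) - c) + w (i + 1) * c := by
  have hTα : Disjoint (tSet V α) S := disjoint_left.mpr hT
  have hSi : sSet V i ⊆ S := (sSet_subset_sSet (by omega)).trans hS
  have hTi : Disjoint (tSet V i) S := hTα.mono_left (tSet_subset_tSet (by omega))
  rw [sum_H2_eq_sum_edgeFinset G hw0 hS hTα]
  rw [sum_congr rfl fun e he => by
    rw [splitVal_edgeHyperedge hSi hTi (G.not_isDiag_of_mem_edgeSet (G.mem_edgeFinset.mp he))]]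
  simp only [sum_apply_ite_eq, hm, hc, filter_mem_eq_inter]

theorem stmt2 {V : Type*} [Fintype V] [DecidableEq V]
    (G : SimpleGraph V) [DecidableRel G.Adj]
    (m : ℕ) (hm : m = G.edgeFinset.card)
    (i : ℕ) (hi : 1 ≤ i) (α : ℕ) (hα : i + 1 ≤ α)
    (w : ℕ → ℝ) (hw0 : w 0 = 0) (hw1 : w 1 = 1) (hw : ∀ n, 0 ≤ w n)
    (S : Finset (Vtx V))
    (hS : sSet V α ⊆ S) (hT : ∀ v ∈ tSet V α, v ∉ S)
    (c : ℕ)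
    (hc : c = (G.edgeFinset.filter
      (fun e => ((edgeImg e).filter (· ∈ S)).card = 1)).card) :
    ∑ e ∈ H2 G α i, w (splitVal S e) = w i * ((m : ℝ) - c) + w (i + 1) * c :=
  stmt2_general G m hm i α hα w hw0 S hS hT c hc
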